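/- arXiv:2103.07826 — 4 statements merged into one kernel-verified Lean document; each statement's English description precedes it below -/
import Mathlib

section
/- Let C_ε = ∂B(r₀ n₀, r₀) \ B(0, ε) be the arc of the circle of radius r₀ = 1/κ₀ tangent to the origin with outward normal n₀ = (cos φ, sin φ), traversed counterclockwise, with κ₀ > 0. Then ∫_{C_ε} G · τ = -κ₀ ( A_φ log(1/(ε κ₀)) + B_φ ) + O(ε²) as ε → 0, where A_φ = 1 + ν - 3ν cos²φ and B_φ = 2( log 2 - (1 - log 2)ν - (3 log 2 - 2)ν cos²φ ), and the O(ε²) is uniform in κ₀ ∈ (0, K] for fixed K. -/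
open Real Set

noncomputable def nrm (z : ℝ × ℝ) : ℝ := Real.sqrt (z.1 ^ 2 + z.2 ^ 2)

def dot (a b : ℝ × ℝ) : ℝ := a.1 * b.1 + a.2 * b.2

noncomputable def G (ν : ℝ) (z : ℝ × ℝ) : ℝ × ℝ :=
  ((1 - ν) * z.2 / (nrm z) ^ 3, -z.1 / (nrm z) ^ 3)

/-- Parametrization of the tangent circle `∂B(r₀ n₀, r₀)`, `n₀ = (cos φ, sin φ)`, `r₀ = 1/κ₀`. -/
noncomputable def paramC (κ₀ φ θ : ℝ) : ℝ × ℝ :=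
  ((1 / κ₀) * (Real.cos φ + Real.cos (θ + φ + π)),
   (1 / κ₀) * (Real.sin φ + Real.sin (θ + φ + π)))

/-- Derivative of `paramC` in `θ`. -/
noncomputable def dparamC (κ₀ φ θ : ℝ) : ℝ × ℝ :=
  ((1 / κ₀) * (-Real.sin (θ + φ + π)), (1 / κ₀) * Real.cos (θ + φ + π))

noncomputable def Aconst (ν φ : ℝ) : ℝ := 1 + ν - 3 * ν * Real.cos φ ^ 2

noncomputable def Bconst (ν φ : ℝ) : ℝ :=
  2 * (Real.log 2 - (1 - Real.log 2) * ν - (3 * Real.log 2 - 2) * ν * Real.cos φ ^ 2)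
/-!
With `s = sin (θ / 2)` the curve point has norm `2 s / κ₀`, and the integrand becomes
`-(κ₀ / 4) (1 / s - ν cos (θ / 2 + φ) sin (θ + φ) / s ²)`, which has an elementary antiderivative
(`circlePotential`). At the endpoints `s = σ := ε κ₀ / 2` and `cos (θ / 2) = ±γ`, `γ := √(1 - σ²)`,
so the integral is known in closed form: adding `κ₀ (A_φ log (1 / (ε κ₀)) + B_φ)` leaves exactly
`κ₀ (A_φ (log 2 - log (1 + γ)) + 2 ν cos 2φ (1 - γ))`, and `|log 2 - log (1 + γ)| ≤ 1 - γ ≤ σ²`.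
-/

lemma paramC_two_mul (κ₀ φ t : ℝ) :
    paramC κ₀ φ (2 * t) = (2 * sin t / κ₀ * sin (t + φ), -(2 * sin t / κ₀ * cos (t + φ))) := by
  simp only [paramC, Prod.mk.injEq, cos_add, sin_add, cos_pi, sin_pi, cos_two_mul_eq_one_sub,
    sin_two_mul]
  constructor <;> ring

lemma nrm_paramC {κ₀ θ : ℝ} (φ : ℝ) (hκ : 0 ≤ κ₀) (hs : 0 ≤ sin (θ / 2)) :
    nrm (paramC κ₀ φ θ) = 2 * sin (θ / 2) / κ₀ := by
  obtain ⟨t, rfl⟩ : ∃ t, θ = 2 * t := ⟨θ / 2, by ring⟩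
  rw [mul_div_cancel_left₀ t two_ne_zero] at hs ⊢
  have hsq : (2 * sin t / κ₀ * sin (t + φ)) ^ 2 + (-(2 * sin t / κ₀ * cos (t + φ))) ^ 2 =
      (2 * sin t / κ₀) ^ 2 := by
    linear_combination (2 * sin t / κ₀) ^ 2 * sin_sq_add_cos_sq (t + φ)
  rw [nrm, paramC_two_mul, hsq, sqrt_sq (by positivity)]

lemma continuousAt_G (ν : ℝ) {z : ℝ × ℝ} (hz : nrm z ≠ 0) : ContinuousAt (G ν) z := by
  have : Continuous nrm := by unfold nrm; fun_prop
  unfold G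
  have hcube := this.continuousAt.pow 3 (x := z)
  exact ((continuousAt_const.mul continuousAt_snd).div hcube (pow_ne_zero 3 hz)).prodMk
    (continuousAt_fst.neg.div hcube (pow_ne_zero 3 hz))

lemma continuousAt_integrand (ν : ℝ) {κ₀ θ : ℝ} (φ : ℝ) (hθ : nrm (paramC κ₀ φ θ) ≠ 0) :
    ContinuousAt (fun θ => dot (G ν (paramC κ₀ φ θ)) (dparamC κ₀ φ θ)) θ := by
  have hp : Continuous (paramC κ₀ φ) := by unfold paramC; fun_prop
  have hdp : Continuous (dparamC κ₀ φ) := by unfold dparamC; fun_prop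
  have hG := (continuousAt_G ν hθ).comp hp.continuousAt
  unfold dot
  exact ((continuousAt_fst.comp hG).mul (continuous_fst.comp hdp).continuousAt).add
    ((continuousAt_snd.comp hG).mul (continuous_snd.comp hdp).continuousAt)

lemma integrand_eq (ν : ℝ) {κ₀ θ : ℝ} (φ : ℝ) (hκ : 0 < κ₀) (hs : 0 < sin (θ / 2)) :
    dot (G ν (paramC κ₀ φ θ)) (dparamC κ₀ φ θ) =
      -(κ₀ / 4) * (1 / sin (θ / 2) - ν * cos (θ / 2 + φ) * sin (θ + φ) / sin (θ / 2) ^ 2) := by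
  rw [G, nrm_paramC φ hκ.le hs.le]
  obtain ⟨t, rfl⟩ : ∃ t, θ = 2 * t := ⟨θ / 2, by ring⟩
  simp only [mul_div_cancel_left₀ t two_ne_zero] at hs ⊢
  have hψ : 2 * t + φ = (t + φ) + t := by ring
  simp only [dot, dparamC, paramC_two_mul, sin_add_pi, cos_add_pi]
  rw [hψ]
  simp only [sin_add (t + φ), cos_add (t + φ)]
  field_simp
  linear_combination (-4 * sin t) * sin_sq_add_cos_sq (t + φ)

noncomputable def circlePotential (ν φ κ₀ θ : ℝ) : ℝ :=
  -(κ₀ / 2) * (Aconst ν φ * (log (sin (θ / 2)) - log (1 + cos (θ / 2)))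
    + ν * (sin (2 * φ) * (2 * sin (θ / 2) + (2 * sin (θ / 2))⁻¹) - 2 * cos (2 * φ) * cos (θ / 2)))

lemma hasDerivAt_circlePotential (ν φ κ₀ : ℝ) {θ : ℝ} (hs : 0 < sin (θ / 2)) :
    HasDerivAt (circlePotential ν φ κ₀)
      (-(κ₀ / 4) * (1 / sin (θ / 2) - ν * cos (θ / 2 + φ) * sin (θ + φ) / sin (θ / 2) ^ 2)) θ := by
  have hc : 0 < 1 + cos (θ / 2) := by nlinarith [sin_sq_add_cos_sq (θ / 2), neg_one_le_cos (θ / 2)]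
  have hhalf : HasDerivAt (fun θ : ℝ => θ / 2) (1 / 2) θ := (hasDerivAt_id θ).div_const 2
  have hsin : HasDerivAt (fun θ => sin (θ / 2)) (cos (θ / 2) * (1 / 2)) θ :=
    (hasDerivAt_sin _).comp θ hhalf
  have hcos : HasDerivAt (fun θ => cos (θ / 2)) (-sin (θ / 2) * (1 / 2)) θ :=
    (hasDerivAt_cos _).comp θ hhalf
  have hlog := ((hsin.log hs.ne').sub ((hcos.const_add 1).log hc.ne')).const_mul (Aconst ν φ)
  have hrest := ((((hsin.const_mul 2).add ((hsin.const_mul 2).inv (by positivity))).const_mul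
    (sin (2 * φ))).sub (hcos.const_mul (2 * cos (2 * φ)))).const_mul ν
  refine ((hlog.add hrest).const_mul (-(κ₀ / 2))).congr_deriv ?_
  obtain ⟨t, rfl⟩ : ∃ t, θ = 2 * t := ⟨θ / 2, by ring⟩
  simp only [mul_div_cancel_left₀ t two_ne_zero] at hs hc ⊢
  simp only [Aconst, sin_add, cos_add, sin_two_mul, cos_two_mul_eq_one_sub]
  field_simp
  linear_combination
    4 * κ₀ * ν * sin t * (cos t + 1 + 2 * sin t ^ 2 * cos t + 2 * sin t ^ 2) * sin_sq_add_cos_sq φ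
    + 4 * κ₀ * sin t * (ν * cos φ ^ 2 * (1 - 2 * cos t) - ν - 1) * sin_sq_add_cos_sq t

lemma integral_integrand_eq (ν φ : ℝ) {κ₀ σ : ℝ} (hκ : 0 < κ₀) (hσ : 0 < σ) :
    ∫ θ in 2 * arcsin σ..2 * π - 2 * arcsin σ, dot (G ν (paramC κ₀ φ θ)) (dparamC κ₀ φ θ) =
      circlePotential ν φ κ₀ (2 * π - 2 * arcsin σ) - circlePotential ν φ κ₀ (2 * arcsin σ) := by
  have hsin : ∀ x ∈ Set.uIcc (2 * arcsin σ) (2 * π - 2 * arcsin σ), 0 < sin (x / 2) := by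
    have h0 := arcsin_pos.2 hσ
    have h1 := arcsin_le_pi_div_two σ
    intro x hx
    rw [Set.uIcc_of_le (by linarith)] at hx
    exact sin_pos_of_pos_of_lt_pi (by linarith [hx.1]) (by linarith [hx.2])
  refine intervalIntegral.integral_eq_sub_of_hasDerivAt (fun x hx => ?_)
    (ContinuousOn.intervalIntegrable fun x hx => ?_)
  · rw [integrand_eq ν φ hκ (hsin x hx)]
    exact hasDerivAt_circlePotential ν φ κ₀ (hsin x hx)
  · refine (continuousAt_integrand ν φ ?_).continuousWithinAt
    rw [nrm_paramC φ hκ.le (hsin x hx).le]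
    exact (div_pos (mul_pos two_pos (hsin x hx)) hκ).ne'

lemma circlePotential_sub (ν φ κ₀ : ℝ) {σ : ℝ} (hσ : 0 < σ) (hσ1 : σ ≤ 1) :
    circlePotential ν φ κ₀ (2 * π - 2 * arcsin σ) - circlePotential ν φ κ₀ (2 * arcsin σ) =
      -κ₀ * (Aconst ν φ * (log (1 + √(1 - σ ^ 2)) - log σ)
        + 2 * ν * cos (2 * φ) * √(1 - σ ^ 2)) := by
  set γ := √(1 - σ ^ 2) with hγ
  have hγ1 : γ < 1 := by
    rw [hγ, sqrt_lt' one_pos]; nlinarith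
  have hγ0 : 0 ≤ γ := sqrt_nonneg _
  have hγsq : (1 - γ) * (1 + γ) = σ ^ 2 := by
    linear_combination -sq_sqrt (by nlinarith : 0 ≤ 1 - σ ^ 2)
  have hlog : log (1 - γ) = 2 * log σ - log (1 + γ) := by
    have := congrArg log hγsq
    rw [log_mul (by linarith) (by linarith), log_pow] at this
    push_cast at this; linarith
  have hhalf : (2 * π - 2 * arcsin σ) / 2 = π - arcsin σ := by ring
  simp only [circlePotential, hhalf, mul_div_cancel_left₀ (arcsin σ) two_ne_zero, sin_pi_sub,
    cos_pi_sub, sin_arcsin (by linarith) hσ1, cos_arcsin, ← hγ, ← sub_eq_add_neg, hlog]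
  ring

lemma Bconst_eq (ν φ : ℝ) : Bconst ν φ = 2 * Aconst ν φ * log 2 + 2 * ν * cos (2 * φ) := by
  rw [Bconst, Aconst, cos_two_mul]; ring

lemma integral_add_leading_eq (ν φ : ℝ) {ε κ₀ : ℝ} (hε : 0 < ε) (hκ : 0 < κ₀) (hεκ : ε * κ₀ ≤ 2) :
    (∫ θ in (2 * arcsin (ε * κ₀ / 2))..(2 * π - 2 * arcsin (ε * κ₀ / 2)),
        dot (G ν (paramC κ₀ φ θ)) (dparamC κ₀ φ θ))
      + κ₀ * (Aconst ν φ * log (1 / (ε * κ₀)) + Bconst ν φ) =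
    κ₀ * (Aconst ν φ * (log 2 - log (1 + √(1 - (ε * κ₀ / 2) ^ 2)))
      + 2 * ν * cos (2 * φ) * (1 - √(1 - (ε * κ₀ / 2) ^ 2))) := by
  have hσ : 0 < ε * κ₀ / 2 := by positivity
  have hlog : log (1 / (ε * κ₀)) = -(log 2 + log (ε * κ₀ / 2)) := by
    rw [one_div, log_inv, ← log_mul two_ne_zero hσ.ne']; ring_nf
  rw [integral_integrand_eq ν φ hκ hσ, circlePotential_sub ν φ κ₀ hσ (by linarith), hlog, Bconst_eq]
  ring

lemma abs_log_two_sub_log_one_add_le {γ : ℝ} (h0 : 0 ≤ γ) (h1 : γ ≤ 1) :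
    |log 2 - log (1 + γ)| ≤ 1 - γ := by
  have hpos : 0 < 1 + γ := by linarith
  rw [← log_div two_ne_zero hpos.ne',
    abs_of_nonneg (log_nonneg ((one_le_div hpos).2 (by linarith)))]
  calc log (2 / (1 + γ)) ≤ 2 / (1 + γ) - 1 := log_le_sub_one_of_pos (by positivity)
    _ ≤ 1 - γ := by rw [div_sub_one hpos.ne', div_le_iff₀ hpos]; nlinarith

lemma one_sub_sqrt_one_sub_sq_le (x : ℝ) : 1 - √(1 - x ^ 2) ≤ x ^ 2 := by
  rcases le_total (1 - x ^ 2) 0 with h | h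
  · rw [sqrt_eq_zero'.2 h]; linarith
  · nlinarith [sq_sqrt h, sqrt_le_one.2 (by linarith [sq_nonneg x] : 1 - x ^ 2 ≤ 1),
      sqrt_nonneg (1 - x ^ 2)]

lemma abs_remainder_le (a b : ℝ) {γ : ℝ} (h0 : 0 ≤ γ) (h1 : γ ≤ 1) :
    |a * (log 2 - log (1 + γ)) + b * (1 - γ)| ≤ (|a| + |b|) * (1 - γ) := by
  calc |a * (log 2 - log (1 + γ)) + b * (1 - γ)|
      ≤ |a * (log 2 - log (1 + γ))| + |b * (1 - γ)| := abs_add_le _ _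
    _ = |a| * |log 2 - log (1 + γ)| + |b| * (1 - γ) := by
        rw [abs_mul, abs_mul, abs_of_nonneg (by linarith : 0 ≤ 1 - γ)]
    _ ≤ (|a| + |b|) * (1 - γ) := by
        nlinarith [abs_log_two_sub_log_one_add_le h0 h1, abs_nonneg a, abs_nonneg b]

theorem circle_integral_expansion_general (ν : ℝ) (φ : ℝ)
    (K : ℝ) (hK : 0 < K) :
    ∃ C > 0, ∃ ε₀ > 0, ∀ ε κ₀ : ℝ, 0 < ε → ε < ε₀ → 0 < κ₀ → κ₀ ≤ K →
      |(∫ θ in (2 * Real.arcsin (ε * κ₀ / 2))..(2 * π - 2 * Real.arcsin (ε * κ₀ / 2)),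
          dot (G ν (paramC κ₀ φ θ)) (dparamC κ₀ φ θ))
        + κ₀ * (Aconst ν φ * Real.log (1 / (ε * κ₀)) + Bconst ν φ)| ≤ C * ε ^ 2 := by
  set M := |Aconst ν φ| + |2 * ν * cos (2 * φ)|
  refine ⟨M * K ^ 3 / 4 + 1, by positivity, 2 / K, by positivity, fun ε κ₀ hε hεK hκ hκK => ?_⟩
  have hεκ : ε * κ₀ ≤ 2 := by
    calc ε * κ₀ ≤ 2 / K * K := by gcongr
      _ = 2 := div_mul_cancel₀ 2 hK.ne'
  set γ := √(1 - (ε * κ₀ / 2) ^ 2) with hγ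
  have hγ0 : 0 ≤ γ := sqrt_nonneg _
  have hγ1 : γ ≤ 1 := sqrt_le_one.2 (by nlinarith)
  rw [integral_add_leading_eq ν φ hε hκ hεκ, ← hγ, abs_mul, abs_of_pos hκ]
  calc κ₀ * |Aconst ν φ * (log 2 - log (1 + γ)) + 2 * ν * cos (2 * φ) * (1 - γ)|
      ≤ κ₀ * (M * (ε * κ₀ / 2) ^ 2) := by
        gcongr
        exact (abs_remainder_le _ _ hγ0 hγ1).trans
          (mul_le_mul_of_nonneg_left (one_sub_sqrt_one_sub_sq_le _) (by positivity))
    _ = M * κ₀ ^ 3 * ε ^ 2 / 4 := by ring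
    _ ≤ M * K ^ 3 * ε ^ 2 / 4 := by gcongr
    _ ≤ (M * K ^ 3 / 4 + 1) * ε ^ 2 := by nlinarith [sq_nonneg ε]

theorem circle_integral_expansion (ν : ℝ) (hν : ν ∈ Ioo (-1 : ℝ) (1 / 2)) (φ : ℝ)
    (K : ℝ) (hK : 0 < K) :
    ∃ C > 0, ∃ ε₀ > 0, ∀ ε κ₀ : ℝ, 0 < ε → ε < ε₀ → 0 < κ₀ → κ₀ ≤ K →
      |(∫ θ in (2 * Real.arcsin (ε * κ₀ / 2))..(2 * π - 2 * Real.arcsin (ε * κ₀ / 2)),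
          dot (G ν (paramC κ₀ φ θ)) (dparamC κ₀ φ θ))
        + κ₀ * (Aconst ν φ * Real.log (1 / (ε * κ₀)) + Bconst ν φ)| ≤ C * ε ^ 2 :=
  circle_integral_expansion_general ν φ K hK
end

section
/- As k ↑ 1, ∫₀^{π/2} (1 - k² cos²θ)^{-3/2} dθ = 1/(1-k²) + O(log(1/(1-k²))); equivalently, with k² = 1/(1+ℓ²), ∫₀^{π/2} (sin²θ + ℓ²)^{-3/2} dθ = 1/ℓ² + O(|log ℓ|) as ℓ → 0. -/
/-!
Write `u = sin² θ + ℓ²`. Since `sin θ · u^{-1/2} / ℓ²` is a primitive of `cos θ · u^{-3/2}`, the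
weighted integral `∫ cos θ · u^{-3/2}` equals `(1 + ℓ²)^{-1/2} / ℓ² = 1/ℓ² + O(1)`. The rest,
`∫ (1 - cos θ) · u^{-3/2}`, is nonnegative and, as `1 - cos θ ≤ sin² θ ≤ u`, at most `∫ u^{-1/2}`.
Jordan's inequality gives `u ≥ max (ℓ, 2θ/π)²`, so that integral is at most `1 + (π/2) log (π/(2ℓ))`.
-/

open Real Set intervalIntegral

lemma rpow_neg_half_eq_mul_rpow_neg_three_halves {x : ℝ} (hx : 0 < x) :
    x ^ (-(1 : ℝ) / 2) = x * x ^ (-(3 : ℝ) / 2) := by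
  rw [show -(1 : ℝ) / 2 = 1 + -(3 : ℝ) / 2 by norm_num, rpow_add hx, rpow_one]

lemma rpow_neg_half_le_inv {x a : ℝ} (ha : 0 < a) (h : a ^ 2 ≤ x) :
    x ^ (-(1 : ℝ) / 2) ≤ a⁻¹ := by
  calc x ^ (-(1 : ℝ) / 2) ≤ (a ^ 2) ^ (-(1 : ℝ) / 2) :=
        rpow_le_rpow_of_nonpos (by positivity) h (by norm_num)
    _ = a⁻¹ := by
      rw [← rpow_natCast, ← rpow_mul ha.le, ← rpow_neg_one]
      norm_num

lemma one_sub_half_le_one_add_rpow_neg_half {c : ℝ} (hc : 0 ≤ c) :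
    1 - c / 2 ≤ (1 + c) ^ (-(1 : ℝ) / 2) := by
  set y := (1 + c) ^ (-(1 : ℝ) / 2)
  have hy_pos : 0 < y := by positivity
  have hy_le : y ≤ 1 := rpow_le_one_of_one_le_of_nonpos (by linarith) (by norm_num)
  have hy_sq : y ^ 2 * (1 + c) = 1 := by
    rw [← rpow_natCast, ← rpow_mul (by positivity), ← rpow_add_one (by positivity)]
    norm_num
  -- with `c = (1 - y²) / y²` the claim becomes `(1 - y)² (2y + 1) ≥ 0`
  nlinarith [mul_nonneg (sq_nonneg (1 - y)) (show 0 ≤ 2 * y + 1 by linarith), mul_pos hy_pos hy_pos]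

lemma abs_one_add_rpow_neg_half_div_sub_inv_le {c : ℝ} (hc : 0 < c) :
    |(1 + c) ^ (-(1 : ℝ) / 2) / c - 1 / c| ≤ 1 / 2 := by
  have hle : (1 + c) ^ (-(1 : ℝ) / 2) ≤ 1 :=
    rpow_le_one_of_one_le_of_nonpos (by linarith) (by norm_num)
  have hge := one_sub_half_le_one_add_rpow_neg_half hc.le
  rw [← sub_div, abs_div, abs_of_pos hc, abs_of_nonpos (by linarith), div_le_iff₀ hc]
  linarith

section

variable {c : ℝ}

lemma sin_sq_add_pos (hc : 0 < c) (θ : ℝ) : 0 < sin θ ^ 2 + c :=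
  add_pos_of_nonneg_of_pos (sq_nonneg _) hc

lemma continuous_sin_sq_add_rpow (hc : 0 < c) (p : ℝ) :
    Continuous fun θ : ℝ => (sin θ ^ 2 + c) ^ p :=
  ((continuous_sin.pow 2).add continuous_const).rpow_const fun θ =>
    Or.inl (sin_sq_add_pos hc θ).ne'

lemma hasDerivAt_sin_mul_rpow_neg_half_div (hc : 0 < c) (θ : ℝ) :
    HasDerivAt (fun θ => sin θ * (sin θ ^ 2 + c) ^ (-(1 : ℝ) / 2) / c)
      (cos θ * (sin θ ^ 2 + c) ^ (-(3 : ℝ) / 2)) θ := by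
  have hu := sin_sq_add_pos hc θ
  have hsq : HasDerivAt (fun θ => sin θ ^ 2 + c) (2 * sin θ * cos θ) θ := by
    simpa using ((hasDerivAt_sin θ).pow 2).add_const c
  have hpow := hsq.rpow_const (p := -(1 : ℝ) / 2) (Or.inl hu.ne')
  refine (((hasDerivAt_sin θ).mul hpow).div_const c).congr_deriv ?_
  rw [show -(1 : ℝ) / 2 - 1 = -(3 : ℝ) / 2 by norm_num,
    rpow_neg_half_eq_mul_rpow_neg_three_halves hu]
  field_simp
  ring

lemma integral_cos_mul_rpow_neg_three_halves (hc : 0 < c) :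
    ∫ θ in (0 : ℝ)..(π / 2), cos θ * (sin θ ^ 2 + c) ^ (-(3 : ℝ) / 2)
      = (1 + c) ^ (-(1 : ℝ) / 2) / c := by
  rw [integral_eq_sub_of_hasDerivAt (fun θ _ => hasDerivAt_sin_mul_rpow_neg_half_div hc θ)
    ((continuous_cos.mul (continuous_sin_sq_add_rpow hc _)).intervalIntegrable _ _)]
  simp

lemma one_sub_cos_mul_rpow_neg_three_halves_le (hc : 0 < c) {θ : ℝ} (hθ : 0 ≤ cos θ) :
    (1 - cos θ) * (sin θ ^ 2 + c) ^ (-(3 : ℝ) / 2) ≤ (sin θ ^ 2 + c) ^ (-(1 : ℝ) / 2) := by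
  have hu := sin_sq_add_pos hc θ
  have hcos : 1 - cos θ ≤ sin θ ^ 2 + c := by nlinarith [sin_sq_add_cos_sq θ, cos_le_one θ]
  rw [rpow_neg_half_eq_mul_rpow_neg_three_halves hu]
  exact mul_le_mul_of_nonneg_right hcos (by positivity)

end

section

variable {ℓ : ℝ}

lemma integral_rpow_neg_half_le_one (hℓ : 0 < ℓ) :
    ∫ θ in (0 : ℝ)..ℓ, (sin θ ^ 2 + ℓ ^ 2) ^ (-(1 : ℝ) / 2) ≤ 1 := by
  calc ∫ θ in (0 : ℝ)..ℓ, (sin θ ^ 2 + ℓ ^ 2) ^ (-(1 : ℝ) / 2)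
      ≤ ∫ _ in (0 : ℝ)..ℓ, ℓ⁻¹ :=
        integral_mono_on hℓ.le
          ((continuous_sin_sq_add_rpow (by positivity) _).intervalIntegrable _ _)
          intervalIntegrable_const
          fun θ _ => rpow_neg_half_le_inv hℓ (by nlinarith [sq_nonneg (sin θ)])
    _ = 1 := by simp [hℓ.ne']

lemma integral_rpow_neg_half_le_log (hℓ : 0 < ℓ) (hℓπ : ℓ ≤ π / 2) :
    ∫ θ in ℓ..(π / 2), (sin θ ^ 2 + ℓ ^ 2) ^ (-(1 : ℝ) / 2) ≤ π / 2 * log (π / 2 / ℓ) := by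
  have hinv : IntervalIntegrable (fun θ : ℝ => π / 2 * θ⁻¹) MeasureTheory.volume ℓ (π / 2) :=
    ((intervalIntegrable_inv (fun x hx => by
      rw [uIcc_of_le hℓπ] at hx; exact (hℓ.trans_le hx.1).ne') continuousOn_id)).const_mul _
  calc ∫ θ in ℓ..(π / 2), (sin θ ^ 2 + ℓ ^ 2) ^ (-(1 : ℝ) / 2)
      ≤ ∫ θ in ℓ..(π / 2), π / 2 * θ⁻¹ :=
        integral_mono_on hℓπ
          ((continuous_sin_sq_add_rpow (by positivity) _).intervalIntegrable _ _) hinv fun θ hθ => by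
            have hθ0 : 0 < θ := hℓ.trans_le hθ.1
            have hjordan := mul_le_sin hθ0.le hθ.2
            calc (sin θ ^ 2 + ℓ ^ 2) ^ (-(1 : ℝ) / 2) ≤ (2 / π * θ)⁻¹ :=
                  rpow_neg_half_le_inv (by positivity) ((pow_le_pow_left₀ (by positivity)
                    hjordan 2).trans (le_add_of_nonneg_right (sq_nonneg ℓ)))
              _ = π / 2 * θ⁻¹ := by field_simp
    _ = π / 2 * log (π / 2 / ℓ) := by
      rw [integral_const_mul, integral_inv_of_pos hℓ (by positivity)]

lemma integral_rpow_neg_half_le (hℓ : 0 < ℓ) (hℓπ : ℓ ≤ π / 2) :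
    ∫ θ in (0 : ℝ)..(π / 2), (sin θ ^ 2 + ℓ ^ 2) ^ (-(1 : ℝ) / 2)
      ≤ 1 + π / 2 * log (π / 2 / ℓ) := by
  have hint : ∀ a b, IntervalIntegrable (fun θ => (sin θ ^ 2 + ℓ ^ 2) ^ (-(1 : ℝ) / 2))
      MeasureTheory.volume a b := fun a b =>
    (continuous_sin_sq_add_rpow (by positivity) _).intervalIntegrable a b
  rw [← integral_add_adjacent_intervals (hint 0 ℓ) (hint ℓ (π / 2))]
  linarith [integral_rpow_neg_half_le_one hℓ, integral_rpow_neg_half_le_log hℓ hℓπ]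

theorem abs_integral_rpow_neg_three_halves_sub_inv_sq_le (hℓ : 0 < ℓ) (hℓπ : ℓ ≤ π / 2) :
    |(∫ θ in (0 : ℝ)..(π / 2), (sin θ ^ 2 + ℓ ^ 2) ^ (-(3 : ℝ) / 2)) - 1 / ℓ ^ 2|
      ≤ 3 / 2 + π / 2 * log (π / 2 / ℓ) := by
  have hc : 0 < ℓ ^ 2 := by positivity
  set I := ∫ θ in (0 : ℝ)..(π / 2), (sin θ ^ 2 + ℓ ^ 2) ^ (-(3 : ℝ) / 2) with hI
  set J := ∫ θ in (0 : ℝ)..(π / 2), cos θ * (sin θ ^ 2 + ℓ ^ 2) ^ (-(3 : ℝ) / 2) with hJ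
  have hrest : I - J
      = ∫ θ in (0 : ℝ)..(π / 2), (1 - cos θ) * (sin θ ^ 2 + ℓ ^ 2) ^ (-(3 : ℝ) / 2) := by
    simp only [hI, hJ, sub_mul, one_mul]
    exact (integral_sub ((continuous_sin_sq_add_rpow hc _).intervalIntegrable _ _)
      ((continuous_cos.mul (continuous_sin_sq_add_rpow hc _)).intervalIntegrable _ _)).symm
  have hrest_int : IntervalIntegrable (fun θ => (1 - cos θ) * (sin θ ^ 2 + ℓ ^ 2) ^ (-(3 : ℝ) / 2))
      MeasureTheory.volume 0 (π / 2) :=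
    ((continuous_const.sub continuous_cos).mul
      (continuous_sin_sq_add_rpow hc _)).intervalIntegrable _ _
  have hrest_nonneg : 0 ≤ I - J := hrest ▸ integral_nonneg (by positivity) fun θ _ =>
    mul_nonneg (sub_nonneg.2 (cos_le_one θ)) (by positivity)
  have hrest_le : I - J ≤ 1 + π / 2 * log (π / 2 / ℓ) := by
    rw [hrest]
    refine (integral_mono_on (by positivity) hrest_int
      ((continuous_sin_sq_add_rpow hc _).intervalIntegrable _ _) fun θ hθ =>
        one_sub_cos_mul_rpow_neg_three_halves_le hc ?_).trans (integral_rpow_neg_half_le hℓ hℓπ)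
    exact cos_nonneg_of_mem_Icc ⟨by linarith [hθ.1, pi_pos], hθ.2⟩
  have hJ_close : |J - 1 / ℓ ^ 2| ≤ 1 / 2 := by
    rw [hJ, integral_cos_mul_rpow_neg_three_halves hc]
    exact abs_one_add_rpow_neg_half_div_sub_inv_le hc
  calc |I - 1 / ℓ ^ 2| ≤ |I - J| + |J - 1 / ℓ ^ 2| := abs_sub_le _ _ _
    _ ≤ 3 / 2 + π / 2 * log (π / 2 / ℓ) := by rw [abs_of_nonneg hrest_nonneg]; linarith

end

theorem elliptic_order3_expansion :
    ∃ C > 0, ∃ ℓ₀ > 0, ∀ ℓ : ℝ, 0 < ℓ → ℓ < ℓ₀ →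
      |(∫ θ in (0 : ℝ)..(π / 2), (Real.sin θ ^ 2 + ℓ ^ 2) ^ (-(3 : ℝ) / 2))
        - 1 / ℓ ^ 2| ≤ C * |Real.log ℓ| := by
  refine ⟨3, by norm_num, exp (-4), exp_pos _, fun ℓ hℓ hℓ₀ => ?_⟩
  have hlog : log ℓ < -4 := (log_lt_iff_lt_exp hℓ).2 hℓ₀
  have hℓπ : ℓ ≤ π / 2 := by
    linarith [exp_lt_one_iff.2 (show (-4 : ℝ) < 0 by norm_num), pi_gt_three]
  have hlogπ : log (π / 2) ≤ 1 := by
    linarith [log_le_sub_one_of_pos pi_div_two_pos, pi_le_four]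
  have hπ : π / 2 * log (π / 2 / ℓ) ≤ 2 * (1 - log ℓ) := by
    rw [log_div pi_div_two_pos.ne' hℓ.ne']
    nlinarith [pi_le_four, pi_pos]
  rw [abs_of_neg (by linarith : log ℓ < 0)]
  linarith [abs_integral_rpow_neg_three_halves_sub_inv_sq_le hℓ hℓπ]
end

section
/- As ℓ → 0, ∫₀^{π/2} (sin²θ + ℓ²)^{-5/2} dθ = (2/3) ℓ^{-4} + O(ℓ^{-2}). -/
/-!
Compare the integrand with `(θ² + ℓ²)^(-5/2)`. Since `θ² - θ⁴/3 ≤ sin² θ ≤ θ²` and, by Jordan's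
inequality, `sin² θ + ℓ² ≥ (2/π)² (θ² + ℓ²)`, the mean value theorem bounds the difference of the two
integrands by a constant times `(θ² + ℓ²)^(-3/2)`, whose integral over `[0, π/2]` is at most `ℓ⁻²`.
The comparison integrand has the elementary primitive `θ (3ℓ² + 2θ²) / (3ℓ⁴ (θ² + ℓ²)^(3/2))`, whose
value at `π/2` differs from its limit `2/(3ℓ⁴)` at infinity by `O(1)`.
-/

open Real Set

theorem rpow_neg_sub_rpow_neg_le {p a b : ℝ} (hp : 0 < p) (ha : 0 < a) (hab : a ≤ b) :
    a ^ (-p) - b ^ (-p) ≤ p * a ^ (-p - 1) * (b - a) := by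
  rcases hab.eq_or_lt with rfl | hab
  · simp
  obtain ⟨ξ, hξ, hslope⟩ := exists_hasDerivAt_eq_slope (fun x => x ^ (-p))
    (fun x => -p * x ^ (-p - 1)) hab
    (continuousOn_id.rpow_const fun x hx => Or.inl (ha.trans_le hx.1).ne')
    (fun x hx => hasDerivAt_rpow_const (Or.inl (ha.trans hx.1).ne'))
  have hξa : ξ ^ (-p - 1) ≤ a ^ (-p - 1) := rpow_le_rpow_of_nonpos ha hξ.1.le (by linarith)
  rw [eq_div_iff (sub_ne_zero.2 hab.ne')] at hslope
  nlinarith [mul_le_mul_of_nonneg_left hξa (mul_nonneg hp.le (sub_nonneg.2 hab.le))]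

theorem sq_sub_sin_sq_le {θ : ℝ} (hθ : 0 ≤ θ) : θ ^ 2 - sin θ ^ 2 ≤ θ ^ 4 / 3 := by
  have hlow : -θ ≤ sin θ := (abs_le.1 (abs_sin_le_abs.trans_eq (abs_of_nonneg hθ))).1
  have h : (θ - sin θ) * (θ + sin θ) ≤ θ ^ 3 / 6 * (2 * θ) :=
    mul_le_mul (by linarith [sin_ge_sub_cube hθ]) (by linarith [sin_le hθ]) (by linarith)
      (by positivity)
  linarith

theorem sq_add_le_sin_sq_add {θ c : ℝ} (hc : 0 ≤ c) (hθ0 : 0 ≤ θ) (hθ : θ ≤ π / 2) :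
    (2 / π) ^ 2 * (θ ^ 2 + c) ≤ sin θ ^ 2 + c := by
  have hjordan : (2 / π * θ) ^ 2 ≤ sin θ ^ 2 :=
    pow_le_pow_left₀ (by positivity) (mul_le_sin hθ0 hθ) 2
  have hκ : (2 / π) ^ 2 ≤ 1 := pow_le_one₀ (by positivity) ((div_le_one pi_pos).2 two_le_pi)
  nlinarith

theorem abs_sin_sq_add_rpow_neg_sub_le {p c θ : ℝ} (hp : 0 < p) (hc : 0 < c) (hθ0 : 0 ≤ θ)
    (hθ : θ ≤ π / 2) :
    |(sin θ ^ 2 + c) ^ (-p) - (θ ^ 2 + c) ^ (-p)| ≤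
      p / 3 * ((2 / π) ^ 2) ^ (-p - 1) * (θ ^ 2 + c) ^ (1 - p) := by
  set a := sin θ ^ 2 + c
  set b := θ ^ 2 + c
  have ha : 0 < a := by positivity
  have hb : 0 < b := by positivity
  have hab : a ≤ b := by linarith [sin_sq_le_sq (x := θ)]
  have hba : b - a ≤ b ^ 2 / 3 := by
    have : θ ^ 4 ≤ b ^ 2 := by
      simpa [← pow_mul] using pow_le_pow_left₀ (sq_nonneg θ) (by linarith : θ ^ 2 ≤ b) 2
    linarith [sq_sub_sin_sq_le hθ0]
  calc |a ^ (-p) - b ^ (-p)| = a ^ (-p) - b ^ (-p) :=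
        abs_of_nonneg (sub_nonneg.2 (rpow_le_rpow_of_nonpos ha hab (by linarith)))
    _ ≤ p * a ^ (-p - 1) * (b - a) := rpow_neg_sub_rpow_neg_le hp ha hab
    _ ≤ p * ((2 / π) ^ 2 * b) ^ (-p - 1) * (b ^ 2 / 3) := by
        gcongr ?_ * ?_ * ?_
        exact rpow_le_rpow_of_nonpos (by positivity) (sq_add_le_sin_sq_add hc.le hθ0 hθ)
          (by linarith)
    _ = p / 3 * ((2 / π) ^ 2) ^ (-p - 1) * b ^ (1 - p) := by
        rw [mul_rpow (by positivity) hb.le, show 1 - p = -p - 1 + (2 : ℕ) by push_cast; ring,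
          rpow_add hb, rpow_natCast]
        ring

theorem continuous_sq_add_rpow {c : ℝ} (hc : 0 < c) (p : ℝ) :
    Continuous fun x : ℝ => (x ^ 2 + c) ^ p :=
  Continuous.rpow_const (by fun_prop) fun x => Or.inl (by positivity)

theorem abs_integral_sin_sq_add_rpow_sub_le {p c : ℝ} (hp : 0 < p) (hc : 0 < c) :
    |(∫ θ in (0 : ℝ)..π / 2, (sin θ ^ 2 + c) ^ (-p)) - ∫ θ in (0 : ℝ)..π / 2, (θ ^ 2 + c) ^ (-p)| ≤
      p / 3 * ((2 / π) ^ 2) ^ (-p - 1) * ∫ θ in (0 : ℝ)..π / 2, (θ ^ 2 + c) ^ (1 - p) := by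
  have hf : Continuous fun θ => (sin θ ^ 2 + c) ^ (-p) :=
    Continuous.rpow_const (by fun_prop) fun θ => Or.inl (by positivity)
  rw [← intervalIntegral.integral_sub (hf.intervalIntegrable _ _)
    ((continuous_sq_add_rpow hc _).intervalIntegrable _ _), ← intervalIntegral.integral_const_mul,
    ← norm_eq_abs]
  refine intervalIntegral.norm_integral_le_of_norm_le (by positivity)
    (MeasureTheory.ae_of_all _ fun θ hθ => abs_sin_sq_add_rpow_neg_sub_le hp hc hθ.1.le hθ.2) ?_
  exact (continuous_const.mul (continuous_sq_add_rpow hc _)).intervalIntegrable _ _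

theorem rpow_neg_odd_div_two {x : ℝ} (hx : 0 < x) (n : ℕ) :
    x ^ (-(2 * n + 1 : ℝ) / 2) = (x ^ n * √x)⁻¹ := by
  rw [show -(2 * n + 1 : ℝ) / 2 = -(n + 1 / 2) by ring, rpow_neg hx.le, rpow_add hx, rpow_natCast,
    ← sqrt_eq_rpow]

theorem hasDerivAt_primitive_sq_add_rpow_neg_three_halves {c : ℝ} (hc : 0 < c) (x : ℝ) :
    HasDerivAt (fun y => y / (c * √(y ^ 2 + c))) ((x ^ 2 + c) ^ (-(3 : ℝ) / 2)) x := by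
  have hu : 0 < x ^ 2 + c := by positivity
  have hsq : √(x ^ 2 + c) ^ 2 = x ^ 2 + c := sq_sqrt hu.le
  have hsq_add : HasDerivAt (fun y => y ^ 2 + c) (2 * x) x := by
    simpa using (hasDerivAt_pow 2 x).add_const c
  have hsqrt : HasDerivAt (fun y => √(y ^ 2 + c)) (2 * x / (2 * √(x ^ 2 + c))) x :=
    hsq_add.sqrt hu.ne'
  rw [show -(3 : ℝ) / 2 = -(2 * (1 : ℕ) + 1) / 2 by norm_num, rpow_neg_odd_div_two hu]
  refine ((hasDerivAt_id' x).div (hsqrt.const_mul c) (by positivity)).congr_deriv ?_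
  field_simp
  linear_combination x ^ 2 * hsq

theorem hasDerivAt_primitive_sq_add_rpow_neg_five_halves {c : ℝ} (hc : 0 < c) (x : ℝ) :
    HasDerivAt (fun y => y * (3 * c + 2 * y ^ 2) / (3 * c ^ 2 * ((y ^ 2 + c) * √(y ^ 2 + c))))
      ((x ^ 2 + c) ^ (-(5 : ℝ) / 2)) x := by
  have hu : 0 < x ^ 2 + c := by positivity
  have hsq : √(x ^ 2 + c) ^ 2 = x ^ 2 + c := sq_sqrt hu.le
  have hsq_add : HasDerivAt (fun y => y ^ 2 + c) (2 * x) x := by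
    simpa using (hasDerivAt_pow 2 x).add_const c
  have hsqrt : HasDerivAt (fun y => √(y ^ 2 + c)) (2 * x / (2 * √(x ^ 2 + c))) x :=
    hsq_add.sqrt hu.ne'
  have hnum : HasDerivAt (fun y => y * (3 * c + 2 * y ^ 2)) (3 * c + 6 * x ^ 2) x := by
    refine ((hasDerivAt_id' x).mul ((hasDerivAt_pow 2 x).const_mul 2 |>.const_add (3 * c)))
      |>.congr_deriv ?_
    push_cast
    ring
  have hden : HasDerivAt (fun y => 3 * c ^ 2 * ((y ^ 2 + c) * √(y ^ 2 + c)))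
      (3 * c ^ 2 * (2 * x * √(x ^ 2 + c) + (x ^ 2 + c) * (2 * x / (2 * √(x ^ 2 + c))))) x :=
    (hsq_add.mul hsqrt).const_mul _
  rw [show -(5 : ℝ) / 2 = -(2 * (2 : ℕ) + 1) / 2 by norm_num, rpow_neg_odd_div_two hu]
  refine (hnum.div hden (by positivity)).congr_deriv ?_
  field_simp
  linear_combination x ^ 2 * (3 * c + 2 * x ^ 2) * hsq

theorem integral_sq_add_rpow_neg_three_halves_le {c X : ℝ} (hc : 0 < c) :
    ∫ x in (0 : ℝ)..X, (x ^ 2 + c) ^ (-(3 : ℝ) / 2) ≤ 1 / c := by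
  rw [intervalIntegral.integral_eq_sub_of_hasDerivAt
    (fun x _ => hasDerivAt_primitive_sq_add_rpow_neg_three_halves hc x)
    ((continuous_sq_add_rpow hc _).intervalIntegrable _ _)]
  have hXs : X ≤ √(X ^ 2 + c) := le_sqrt_of_sq_le (by linarith)
  rw [zero_div, sub_zero, div_le_div_iff₀ (by positivity) hc]
  nlinarith

theorem integral_sq_add_rpow_neg_five_halves {c X : ℝ} (hc : 0 < c) :
    ∫ x in (0 : ℝ)..X, (x ^ 2 + c) ^ (-(5 : ℝ) / 2) =
      X * (3 * c + 2 * X ^ 2) / (3 * c ^ 2 * ((X ^ 2 + c) * √(X ^ 2 + c))) := by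
  rw [intervalIntegral.integral_eq_sub_of_hasDerivAt
    (fun x _ => hasDerivAt_primitive_sq_add_rpow_neg_five_halves hc x)
    ((continuous_sq_add_rpow hc _).intervalIntegrable _ _)]
  simp

theorem abs_primitive_sq_add_rpow_neg_five_halves_sub_le {c X : ℝ} (hc : 0 < c) (hX : 0 < X) :
    |X * (3 * c + 2 * X ^ 2) / (3 * c ^ 2 * ((X ^ 2 + c) * √(X ^ 2 + c))) - 2 / (3 * c ^ 2)| ≤
      1 / (3 * X ^ 4) := by
  set s := √(X ^ 2 + c)
  have hs2 : s ^ 2 = X ^ 2 + c := sq_sqrt (by positivity)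
  have hXs : X < s := lt_sqrt_of_sq_lt (by linarith)
  have htail : 2 / (3 * c ^ 2) - X * (3 * c + 2 * X ^ 2) / (3 * c ^ 2 * ((X ^ 2 + c) * s)) =
      (2 * s + X) / (3 * s ^ 3 * (s + X) ^ 2) := by
    have hs : s ≠ 0 := by positivity
    have hsX : s - X ≠ 0 := sub_ne_zero.2 hXs.ne'
    have hsX' : s + X ≠ 0 := by positivity
    rw [← hs2, show c = (s - X) * (s + X) by linear_combination -hs2]
    field_simp
    ring
  rw [abs_sub_comm, abs_of_nonneg (htail ▸ by positivity), htail]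
  calc (2 * s + X) / (3 * s ^ 3 * (s + X) ^ 2)
      ≤ 2 * (s + X) / (3 * s ^ 3 * (s + X) ^ 2) := by gcongr; linarith
    _ = 2 / (3 * s ^ 3 * (s + X)) := by field_simp
    _ ≤ 2 / (3 * X ^ 3 * (X + X)) := by gcongr
    _ = 1 / (3 * X ^ 4) := by field_simp; ring

theorem elliptic_order5_expansion :
    ∃ C > 0, ∃ ℓ₀ > 0, ∀ ℓ : ℝ, 0 < ℓ → ℓ < ℓ₀ →
      |(∫ θ in (0 : ℝ)..(π / 2), (Real.sin θ ^ 2 + ℓ ^ 2) ^ (-(5 : ℝ) / 2))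
        - (2 / 3) / ℓ ^ 4| ≤ C / ℓ ^ 2 := by
  set K : ℝ := 5 / 2 / 3 * ((2 / π) ^ 2) ^ (-(5 : ℝ) / 2 - 1)
  refine ⟨K + 1, by positivity, 1, one_pos, fun ℓ hℓ hℓ1 => ?_⟩
  have hc : 0 < ℓ ^ 2 := by positivity
  have hcomparison : |(∫ θ in (0 : ℝ)..π / 2, (sin θ ^ 2 + ℓ ^ 2) ^ (-(5 : ℝ) / 2)) -
      ∫ θ in (0 : ℝ)..π / 2, (θ ^ 2 + ℓ ^ 2) ^ (-(5 : ℝ) / 2)| ≤ K * (1 / ℓ ^ 2) := by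
    have h := abs_integral_sin_sq_add_rpow_sub_le (p := 5 / 2) (by norm_num) hc
    rw [← neg_div, show (1 : ℝ) - 5 / 2 = -3 / 2 by norm_num] at h
    refine h.trans ?_
    gcongr
    exact integral_sq_add_rpow_neg_three_halves_le hc
  have hmodel : |(∫ θ in (0 : ℝ)..π / 2, (θ ^ 2 + ℓ ^ 2) ^ (-(5 : ℝ) / 2)) - 2 / 3 / ℓ ^ 4| ≤
      1 / ℓ ^ 2 := by
    rw [integral_sq_add_rpow_neg_five_halves hc, show (2 : ℝ) / 3 / ℓ ^ 4 = 2 / (3 * (ℓ ^ 2) ^ 2)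
      by ring]
    refine (abs_primitive_sq_add_rpow_neg_five_halves_sub_le hc (by positivity)).trans
      (one_div_le_one_div_of_le hc ?_)
    have : 1 ≤ (π / 2) ^ 4 := one_le_pow₀ (by linarith [two_le_pi])
    nlinarith
  calc _ ≤ _ := abs_sub_le _ (∫ θ in (0 : ℝ)..π / 2, (θ ^ 2 + ℓ ^ 2) ^ (-(5 : ℝ) / 2)) _
    _ ≤ K * (1 / ℓ ^ 2) + 1 / ℓ ^ 2 := add_le_add hcomparison hmodel
    _ = (K + 1) / ℓ ^ 2 := by ring
end

section
/- Let ψ(κ) = κ log|κ| (with ψ(0) = 0). Suppose |κ - κʰ| ≤ M h with M > 0, h ∈ (0, 1/e), and |κ|, |κʰ| ≤ K. Then |ψ(κ) - ψ(κʰ)| ≤ C h log(1/h) for a constant C depending only on M and K. -/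
open Real

/-! For `|b| ≤ |a|`, `a log a - b log b = (a - b) log a + b (log a - log b)` (Mathlib's `log` already
satisfies `log x = log |x|`), and by `log x ≤ x - 1` the second term is at most `|a| - |b| ≤ |a - b|`.
Hence `|ψ a - ψ b| ≤ |a - b| (|log a| + 1)`. When `M h ≤ |a| ≤ K` this is `O(h log (1/h))`. When
`|a| < M h`, comparing `a` and `b` with the point `M h` by the same estimate shows that `ψ` itself is
`O(h log (1/h))` on `[-M h, M h]`. -/

namespace Real

lemma mul_log_sub_log_le {x y : ℝ} (hx : 0 < x) (hy : 0 < y) :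
    x * (log y - log x) ≤ y - x := by
  have h := log_le_sub_one_of_pos (div_pos hy hx)
  rw [log_div hy.ne' hx.ne'] at h
  calc x * (log y - log x) ≤ x * (y / x - 1) := by gcongr
    _ = y - x := by field_simp

lemma abs_mul_log_sub_mul_log_le {a b : ℝ} (hba : |b| ≤ |a|) :
    |a * log a - b * log b| ≤ |a - b| * (|log a| + 1) := by
  have hsplit : a * log a - b * log b = (a - b) * log a + b * (log a - log b) := by ring
  have hratio : |b * (log a - log b)| ≤ |a - b| := by
    rcases eq_or_ne b 0 with rfl | hb
    · simp
    have hb' : 0 < |b| := abs_pos.mpr hb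
    rw [abs_mul, ← log_abs a, ← log_abs b,
      abs_of_nonneg (sub_nonneg.mpr (log_le_log hb' hba))]
    exact (mul_log_sub_log_le hb' (hb'.trans_le hba)).trans (abs_sub_abs_le_abs_sub a b)
  calc |a * log a - b * log b| ≤ |a - b| * |log a| + |a - b| := by
        rw [hsplit, ← abs_mul]; exact (abs_add_le _ _).trans (add_le_add_right hratio _)
    _ = |a - b| * (|log a| + 1) := by ring

lemma abs_mul_log_le_of_abs_le {s t : ℝ} (hts : |t| ≤ s) :
    |t * log t| ≤ 3 * s * |log s| + 2 * s := by
  have hs : 0 ≤ s := (abs_nonneg t).trans hts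
  have hdiff := abs_mul_log_sub_mul_log_le (a := s) (b := t) (by rwa [abs_of_nonneg hs])
  have hst : |s - t| ≤ 2 * s := (abs_sub _ _).trans (by rw [abs_of_nonneg hs]; linarith)
  calc |t * log t| ≤ |s * log s| + |s * log s - t * log t| := by
        have := abs_sub (s * log s) (s * log s - t * log t)
        rwa [sub_sub_cancel] at this
    _ ≤ s * |log s| + 2 * s * (|log s| + 1) := by
        rw [abs_mul, abs_of_nonneg hs]
        gcongr
        exact hdiff.trans (mul_le_mul_of_nonneg_right hst (by positivity))
    _ = 3 * s * |log s| + 2 * s := by ring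

lemma abs_log_le_abs_log_add_abs_log {x y z : ℝ} (hx : 0 < x) (hxy : x ≤ y) (hyz : y ≤ z) :
    |log y| ≤ |log x| + |log z| :=
  (abs_le_max_abs_abs (log_le_log hx hxy) (log_le_log (hx.trans_le hxy) hyz)).trans
    (max_le_add_of_nonneg (abs_nonneg _) (abs_nonneg _))

lemma abs_mul_log_sub_mul_log_le_of_abs_sub_le {M K h a b : ℝ} (hM : 0 < M) (hh : 0 < h)
    (hba : |b| ≤ |a|) (haK : |a| ≤ K) (hab : |a - b| ≤ M * h) :
    |a * log a - b * log b| ≤ M * h * (6 * |log h| + 6 * (|log M| + |log K|) + 4) := by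
  have hMh : 0 < M * h := mul_pos hM hh
  have hlogMh : |log (M * h)| ≤ |log M| + |log h| := by
    rw [log_mul hM.ne' hh.ne']; exact abs_add_le _ _
  rcases le_or_gt (M * h) |a| with hlarge | hsmall
  · have hloga : |log a| ≤ |log M| + |log h| + |log K| := by
      rw [← log_abs a]; linarith [abs_log_le_abs_log_add_abs_log hMh hlarge haK]
    calc |a * log a - b * log b| ≤ |a - b| * (|log a| + 1) := abs_mul_log_sub_mul_log_le hba
      _ ≤ M * h * (|log M| + |log h| + |log K| + 1) := by gcongr
      _ ≤ M * h * (6 * |log h| + 6 * (|log M| + |log K|) + 4) := by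
        gcongr ?_ * ?_; linarith [abs_nonneg (log h), abs_nonneg (log M), abs_nonneg (log K)]
  · have ha := abs_mul_log_le_of_abs_le hsmall.le
    have hb := abs_mul_log_le_of_abs_le (hba.trans hsmall.le)
    calc |a * log a - b * log b| ≤ |a * log a| + |b * log b| := abs_sub _ _
      _ ≤ M * h * (6 * |log (M * h)| + 4) := by linarith
      _ ≤ M * h * (6 * |log h| + 6 * (|log M| + |log K|) + 4) := by
        gcongr ?_ * ?_; linarith [abs_nonneg (log K)]

end Real

theorem kappa_log_kappa_error_general (M K : ℝ) (hM : 0 < M) :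
    ∃ C > 0, ∀ h κ κh : ℝ, 0 < h → h < 1 / Real.exp 1 →
      |κ - κh| ≤ M * h → |κ| ≤ K → |κh| ≤ K →
      abs (κ * Real.log (abs κ) - κh * Real.log (abs κh)) ≤ C * h * Real.log (1 / h) := by
  set A := |log M| + |log K|
  refine ⟨M * (10 + 6 * A), by positivity, ?_⟩
  intro h κ κh hh hhe hdiff hκ hκh
  have hL : 1 < -log h := by
    rw [← log_inv, lt_log_iff_exp_lt (inv_pos.mpr hh), lt_inv_comm₀ (exp_pos 1) hh]
    rwa [one_div] at hhe
  have key : |κ * log κ - κh * log κh| ≤ M * h * (6 * |log h| + 6 * A + 4) := by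
    rcases le_total |κh| |κ| with hle | hle
    · exact abs_mul_log_sub_mul_log_le_of_abs_sub_le hM hh hle hκ hdiff
    · rw [abs_sub_comm]
      exact abs_mul_log_sub_mul_log_le_of_abs_sub_le hM hh hle hκh (by rwa [abs_sub_comm])
  rw [log_abs, log_abs, one_div, log_inv]
  rw [abs_of_neg (a := log h) (by linarith)] at key
  calc _ ≤ M * h * (6 * -log h + 6 * A + 4) := key
    _ ≤ M * h * ((10 + 6 * A) * -log h) := by
      have hA : 0 ≤ A := by positivity
      gcongr ?_ * ?_
      nlinarith
    _ = M * (10 + 6 * A) * h * -log h := by ring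

theorem kappa_log_kappa_error (M K : ℝ) (hM : 0 < M) (hK : 0 < K) :
    ∃ C > 0, ∀ h κ κh : ℝ, 0 < h → h < 1 / Real.exp 1 →
      |κ - κh| ≤ M * h → |κ| ≤ K → |κh| ≤ K →
      abs (κ * Real.log (abs κ) - κh * Real.log (abs κh)) ≤ C * h * Real.log (1 / h) :=
  kappa_log_kappa_error_general M K hM
end
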